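/- Let M ≥ 2, N ≥ 1 be integers, 0 ≤ m ≤ M−1, α > 0, and let F̄ = √α·Q̄_m where Q̄_m is the NM-point DFT matrix with the N columns indexed {m+nM : 0 ≤ n ≤ N−1} removed. Then for every pair i ≠ j in {1,…,M}: (S_j F̄ F̄^H S_j^T) ⊗ I_N − [ (S_j F̄ F̄^H S̄_(i)^T)(I_{(M−1)N} + S̄_(i) F̄ F̄^H S̄_(i)^T)^{−1}(S̄_(i) F̄ F̄^H S_j^T) ] ⊗ I_N = Γ·I_{N²}, where Γ = ( αMN − Nα/(1+Nα) ) / (1 + MNα), and 0 < Γ < 1. -/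

import Mathlib

open Matrix Kronecker

/-- The matrix `I_{M,i} ∈ ℂ^{(M-1)×M}`: the identity matrix `I_M` with its `i`-th row
removed. -/
noncomputable def rowRemoved (M : ℕ) (i : Fin M) : Matrix (Fin (M - 1)) (Fin M) ℂ :=
  Matrix.of fun j k =>
    if (k : ℕ) = (if (j : ℕ) < (i : ℕ) then (j : ℕ) else (j : ℕ) + 1) then 1 else 0

/-- `S̄_(i) = I_{M,i} ⊗ I_N`. -/
noncomputable def sBar (M N : ℕ) (i : Fin M) :
    Matrix (Fin (M - 1) × Fin N) (Fin M × Fin N) ℂ :=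
  rowRemoved M i ⊗ₖ (1 : Matrix (Fin N) (Fin N) ℂ)

/-- `S_i = e_iᵀ ⊗ I_N ∈ ℂ^{N × MN}`, the selection matrix of user `i`. -/
noncomputable def sSel (M N : ℕ) (i : Fin M) : Matrix (Fin N) (Fin M × Fin N) ℂ :=
  Matrix.of fun b jc => if jc.1 = i ∧ jc.2 = b then 1 else 0

/-!
Removing the `N` DFT columns `m + nM` leaves `Q̄` with Gram matrix
`Q̄ Q̄ᴴ = N (M I_M - x xᴴ) ⊗ I_N`, where `x` is the `m`-th column of the `M`-point DFT: the
entries are geometric sums of a primitive `NM`-th root of unity over all indices minus those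
`≡ m (mod M)`. Since `j ≠ i`, the selection `S_j` is a block row of `S̄_(i)`, so all three
products are blocks of `K = S̄_(i) F̄ F̄ᴴ S̄_(i)ᵀ`, and the left side collapses to a block of
`K - K (1 + K)⁻¹ K = 1 - (1 + K)⁻¹`. Here `1 + K = ((1 + αNM) I - αN y yᴴ) ⊗ I_N` with
`|y_k| = 1` and `‖y‖² = M - 1`, so Sherman–Morrison gives every diagonal entry of `(1 + K)⁻¹` as
`(1 + αN/(1 + αN)) / (1 + αNM) = 1 - Γ`.
-/

open Complex
open scoped Real

theorem Fintype.sum_subtype_eq_sub_sum_comp {ι κ R : Type*} [Fintype ι] [Fintype κ]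
    [AddCommGroup R] {g : ι → κ} (hg : Function.Injective g) (p : κ → Prop) [DecidablePred p]
    (hp : ∀ k, p k ↔ ∀ i, k ≠ g i) (f : κ → R) :
    ∑ k : {k // p k}, f k = ∑ k, f k - ∑ i, f (g i) := by
  let e : ι ≃ {k // ¬ p k} := (Equiv.ofInjective g hg).trans
    (Equiv.subtypeEquivRight fun k => by simp [hp, eq_comm])
  rw [← Fintype.sum_subtype_add_sum_subtype p f,
    Fintype.sum_equiv e (fun i => f (g i)) (fun k => f k) fun _ => rfl]
  abel

theorem sum_fin_pow_eq_ite {K : ℕ} {η : ℂ} (hη : η ^ K = 1) :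
    ∑ k : Fin K, η ^ (k : ℕ) = if η = 1 then (K : ℂ) else 0 := by
  rw [Fin.sum_univ_eq_sum_range]
  split_ifs with h
  · simp [h]
  · rw [geom_sum_eq h, hη, sub_self, zero_div]

theorem sum_pow_subtype_ne_add_mul {N M m : ℕ} (hm : m < M) {η : ℂ} (hη : η ^ (N * M) = 1) :
    ∑ k : {k : Fin (N * M) // ∀ n : Fin N, (k : ℕ) ≠ m + (n : ℕ) * M},
        η ^ ((k : Fin (N * M)) : ℕ) =
      (if η = 1 then ((N * M : ℕ) : ℂ) else 0) - η ^ m * if η ^ M = 1 then (N : ℂ) else 0 := by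
  have hlt (n : Fin N) : m + (n : ℕ) * M < N * M := by nlinarith [n.isLt]
  have hinj : Function.Injective fun n : Fin N => (⟨m + n * M, hlt n⟩ : Fin (N * M)) := by
    intro a b h
    have : (a : ℕ) * M = b * M := by simpa using congrArg Fin.val h
    exact Fin.ext (Nat.eq_of_mul_eq_mul_right (by omega) this)
  rw [Fintype.sum_subtype_eq_sub_sum_comp hinj _ (fun k => by simp [Fin.ext_iff])
    (fun k : Fin (N * M) => η ^ (k : ℕ)), sum_fin_pow_eq_ite hη]
  simp_rw [pow_add, mul_comm _ M, pow_mul, ← Finset.mul_sum]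
  rw [sum_fin_pow_eq_ite (by rw [← pow_mul, mul_comm, hη])]

theorem Fin.intCast_dvd_sub_iff {N : ℕ} (b b' : Fin N) : (N : ℤ) ∣ (b' : ℤ) - b ↔ b = b' := by
  refine ⟨fun h => ?_, fun h => by simp [h]⟩
  have := Int.eq_zero_of_abs_lt_dvd h (by rw [abs_lt]; omega)
  omega

theorem natCast_dvd_mul_add_sub_mul_add_iff {N : ℕ} (j j' : ℕ) (b b' : Fin N) :
    (N : ℤ) ∣ ((j' * N + b' : ℕ) : ℤ) - (j * N + b : ℕ) ↔ b = b' := by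
  have : ((j' * N + b' : ℕ) : ℤ) - (j * N + b : ℕ) = (j' - j) * N + ((b' : ℤ) - b) := by
    push_cast; ring
  rw [this, dvd_add_right (dvd_mul_left _ _), Fin.intCast_dvd_sub_iff]

theorem natCast_mul_dvd_mul_add_sub_mul_add_iff {N M : ℕ} (hN : N ≠ 0) (j j' : Fin M) (b b' : Fin N) :
    ((N * M : ℕ) : ℤ) ∣ ((j' * N + b' : ℕ) : ℤ) - (j * N + b : ℕ) ↔ (j, b) = (j', b') := by
  by_cases hb : b = b'
  · subst hb
    rw [Prod.mk.injEq, and_iff_left rfl, ← Fin.intCast_dvd_sub_iff]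
    push_cast
    rw [show ((j' : ℤ) * N + b - (j * N + b)) = (j' - j) * N by ring, mul_comm (N : ℤ),
      Int.mul_dvd_mul_iff_right (by exact_mod_cast hN)]
  · have := mt (natCast_dvd_mul_add_sub_mul_add_iff (j : ℕ) j' b b').mp hb
    simp only [Prod.mk.injEq, hb, and_false, iff_false]
    exact fun h => this (dvd_trans (by push_cast; exact dvd_mul_right _ _) h)

theorem exp_neg_mul_star_exp_neg_eq_zpow (K a c : ℕ) :
    exp (-(2 * π * I * (a : ℂ)) / K) * star (exp (-(2 * π * I * (c : ℂ)) / K)) =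
      exp (2 * π * I / K) ^ ((c : ℤ) - a) := by
  have hinv : star (exp (2 * π * I / K)) = (exp (2 * π * I / K))⁻¹ := by
    rw [← Complex.exp_neg, RCLike.star_def, ← Complex.exp_conj]
    simp [map_div₀, neg_div, map_ofNat]
  have hpow (n : ℕ) : exp (-(2 * π * I * (n : ℂ)) / K) = exp (2 * π * I / K) ^ (-(n : ℤ)) := by
    rw [_root_.zpow_neg, zpow_natCast, ← Complex.exp_nat_mul, ← Complex.exp_neg]
    ring_nf
  rw [hpow, hpow, star_zpow₀, hinv, _root_.inv_zpow', neg_neg,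
    ← zpow_add₀ (Complex.exp_ne_zero _)]
  ring_nf

theorem exp_two_pi_I_div_mul_pow {N : ℕ} (hN : N ≠ 0) (M : ℕ) :
    exp (2 * π * I / (N * M : ℕ)) ^ N = exp (2 * π * I / M) := by
  rw [← Complex.exp_nat_mul]
  congr 1
  push_cast
  field_simp

noncomputable def dftColumn (M m : ℕ) (j : Fin M) : ℂ :=
  exp (-(2 * π * I * ((j * m : ℕ) : ℂ)) / M)

theorem mul_conjTranspose_eq_of_dft_columns_removed {M N m : ℕ} (hN : N ≠ 0) (hm : m < M)
    (Qbar : Matrix (Fin M × Fin N)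
      {k : Fin (N * M) // ∀ n : Fin N, (k : ℕ) ≠ m + (n : ℕ) * M} ℂ)
    (hQbar : ∀ (j : Fin M) (b : Fin N)
        (k : {k : Fin (N * M) // ∀ n : Fin N, (k : ℕ) ≠ m + (n : ℕ) * M}),
      Qbar (j, b) k =
        exp (-(2 * (π : ℂ) * I *
          ((((j : ℕ) * N + (b : ℕ)) * ((k : Fin (N * M)) : ℕ) : ℕ) : ℂ)) / ((N * M : ℕ) : ℂ))) :
    Qbar * Qbarᴴ = (N : ℂ) •
      (((M : ℂ) • 1 - vecMulVec (dftColumn M m) (star (dftColumn M m))) ⊗ₖ 1) := by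
  set ζ := exp (2 * π * I / (N * M : ℕ))
  have hζ : IsPrimitiveRoot ζ (N * M) :=
    isPrimitiveRoot_exp _ (Nat.mul_ne_zero hN (Nat.ne_zero_of_lt hm))
  ext ⟨j, b⟩ ⟨j', b'⟩
  set d : ℤ := ((j' * N + b' : ℕ) : ℤ) - (j * N + b : ℕ)
  have hterm (k : {k : Fin (N * M) // ∀ n : Fin N, (k : ℕ) ≠ m + (n : ℕ) * M}) :
      Qbar (j, b) k * star (Qbar (j', b') k) = (ζ ^ d) ^ ((k : Fin (N * M)) : ℕ) := by
    rw [hQbar, hQbar, exp_neg_mul_star_exp_neg_eq_zpow, ← zpow_natCast, ← _root_.zpow_mul]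
    congr 1
    push_cast [d]
    ring
  have hroot : (ζ ^ d) ^ (N * M) = 1 := by
    rw [← zpow_natCast, ← _root_.zpow_mul, mul_comm, _root_.zpow_mul, hζ.zpow_eq_one,
      _root_.one_zpow]
  rw [mul_apply]
  simp_rw [conjTranspose_apply, hterm]
  have hone : ζ ^ d = 1 ↔ (j, b) = (j', b') := by
    rw [hζ.zpow_eq_one_iff_dvd]
    exact natCast_mul_dvd_mul_add_sub_mul_add_iff hN j j' b b'
  have hpow_M : (ζ ^ d) ^ M = 1 ↔ b = b' := by
    rw [← zpow_natCast, ← _root_.zpow_mul, hζ.zpow_eq_one_iff_dvd, Nat.cast_mul,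
      Int.mul_dvd_mul_iff_right (by exact_mod_cast (Nat.ne_zero_of_lt hm)),
      natCast_dvd_mul_add_sub_mul_add_iff]
  have hpow_m (hb : b = b') : (ζ ^ d) ^ m = dftColumn M m j * star (dftColumn M m j') := by
    subst hb
    rw [dftColumn, dftColumn, exp_neg_mul_star_exp_neg_eq_zpow, ← exp_two_pi_I_div_mul_pow hN,
      ← zpow_natCast, ← _root_.zpow_mul, ← zpow_natCast, ← _root_.zpow_mul]
    congr 1
    push_cast [d]
    ring
  rw [sum_pow_subtype_ne_add_mul hm hroot, if_congr hone rfl rfl, if_congr hpow_M rfl rfl]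
  by_cases hb : b = b'
  · subst hb
    by_cases hj : j = j' <;> simp [hj, hpow_m, vecMulVec_apply] <;> ring
  · simp [hb]

/-- `Fin.succAbove i`, typed on `Fin (M - 1)` so as to avoid the cast `M = (M - 1) + 1`. -/
def skipIndex {M : ℕ} (i : Fin M) (c : Fin (M - 1)) : Fin M :=
  ⟨if (c : ℕ) < i then c else c + 1, by have := c.isLt; have := i.isLt; split_ifs <;> omega⟩

theorem skipIndex_injective {M : ℕ} (i : Fin M) : Function.Injective (skipIndex i) := by
  intro c c' h
  have := congrArg Fin.val h
  simp only [skipIndex] at this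
  split_ifs at this <;> omega

theorem exists_skipIndex_eq {M : ℕ} {i j : Fin M} (hij : i ≠ j) : ∃ p, skipIndex i p = j := by
  have := Fin.val_ne_of_ne hij
  rcases lt_or_gt_of_ne this with h | h
  · exact ⟨⟨j - 1, by omega⟩, Fin.ext (by simp only [skipIndex]; split_ifs <;> omega)⟩
  · exact ⟨⟨j, by omega⟩, Fin.ext (by simp [skipIndex, h])⟩

theorem rowRemoved_eq_submatrix (M : ℕ) (i : Fin M) :
    rowRemoved M i = (1 : Matrix (Fin M) (Fin M) ℂ).submatrix (skipIndex i) id := by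
  ext c k
  simp [rowRemoved, one_apply, skipIndex, Fin.ext_iff, eq_comm]

theorem sBar_eq_submatrix (M N : ℕ) (i : Fin M) :
    sBar M N i = (1 : Matrix (Fin M × Fin N) (Fin M × Fin N) ℂ).submatrix
      (Prod.map (skipIndex i) id) id := by
  rw [sBar, rowRemoved_eq_submatrix, ← submatrix_id_id (1 : Matrix (Fin N) (Fin N) ℂ),
    kroneckerMap_submatrix_submatrix, one_kronecker_one]
  rfl

theorem sSel_eq_submatrix (M N : ℕ) (j : Fin M) :
    sSel M N j =
      (1 : Matrix (Fin M × Fin N) (Fin M × Fin N) ℂ).submatrix (fun b => (j, b)) id := by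
  ext b q
  simp [sSel, one_apply, Prod.ext_iff, eq_comm]

theorem one_submatrix_mul_mul_transpose_one_submatrix {ι κ ι' α : Type*} [Fintype κ]
    [DecidableEq κ] [NonAssocSemiring α] (G : Matrix κ κ α) (f : ι → κ) (g : ι' → κ) :
    (1 : Matrix κ κ α).submatrix f id * G * ((1 : Matrix κ κ α).submatrix g id)ᵀ =
      G.submatrix f g := by
  rw [transpose_submatrix, transpose_one]
  exact (congrArg (· * _) (one_submatrix_mul f (Equiv.refl κ) G)).trans
    (mul_submatrix_one (Equiv.refl κ) g _)

theorem Matrix.sub_kronecker {l m n p α : Type*} [Ring α] (A₁ A₂ : Matrix l m α)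
    (B : Matrix n p α) : (A₁ - A₂) ⊗ₖ B = A₁ ⊗ₖ B - A₂ ⊗ₖ B := by
  ext ⟨_, _⟩ ⟨_, _⟩
  simp [sub_mul]

theorem kronecker_one_submatrix_prodMk {m n α : Type*} [DecidableEq n] [MulZeroOneClass α]
    (A : Matrix m m α) (p : m) :
    (A ⊗ₖ (1 : Matrix n n α)).submatrix (fun b => (p, b)) (fun b => (p, b)) = A p p • 1 := by
  ext b b'
  simp [one_apply]

theorem sub_mul_mul_eq_one_sub_of_mul_eq_one {n 𝕜 : Type*} [Fintype n] [DecidableEq n] [Field 𝕜]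
    {K W : Matrix n n 𝕜} (h : (1 + K) * W = 1) : K - K * W * K = 1 - W := by
  have h' : W * (1 + K) = 1 := mul_eq_one_comm.mp h
  have hKW : K * W = 1 - W := by rw [← h]; noncomm_ring
  have hWK : W * K = 1 - W := by rw [← h']; noncomm_ring
  rw [hKW, Matrix.sub_mul, Matrix.one_mul, hWK]
  abel

/-- Sherman–Morrison. -/
theorem smul_one_sub_smul_vecMulVec_mul {n 𝕜 : Type*} [Fintype n] [DecidableEq n] [Field 𝕜]
    {c β : 𝕜} (u v : n → 𝕜) (hc : c ≠ 0) (hcβ : c - β * (v ⬝ᵥ u) ≠ 0) :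
    (c • 1 - β • vecMulVec u v) * (c⁻¹ • (1 + (β / (c - β * (v ⬝ᵥ u))) • vecMulVec u v)) =
      1 := by
  have hsq : vecMulVec u v * vecMulVec u v = (v ⬝ᵥ u) • vecMulVec u v := by
    rw [vecMulVec_mul_vecMulVec, vecMulVec_smul]
  simp only [Matrix.mul_smul, Matrix.mul_add, Matrix.sub_mul, Matrix.smul_mul, Matrix.mul_one,
    Matrix.one_mul, hsq, smul_smul]
  match_scalars <;> field_simp; ring

theorem sSel_sub_sBar_inv_eq_smul_one {M N : ℕ} {i j : Fin M} {p : Fin (M - 1)}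
    (hp : skipIndex i p = j) (G : Matrix (Fin M × Fin N) (Fin M × Fin N) ℂ)
    {B V : Matrix (Fin (M - 1)) (Fin (M - 1)) ℂ}
    (hG : G.submatrix (Prod.map (skipIndex i) id) (Prod.map (skipIndex i) id) = B ⊗ₖ 1)
    (hV : (1 + B) * V = 1) :
    sSel M N j * G * (sSel M N j)ᵀ - sSel M N j * G * (sBar M N i)ᵀ *
        (1 + sBar M N i * G * (sBar M N i)ᵀ)⁻¹ * (sBar M N i * G * (sSel M N j)ᵀ) =
      (1 - V p p) • 1 := by
  set K := B ⊗ₖ (1 : Matrix (Fin N) (Fin N) ℂ)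
  set W := V ⊗ₖ (1 : Matrix (Fin N) (Fin N) ℂ)
  set ι : Fin N → Fin (M - 1) × Fin N := fun b => (p, b)
  have hSel : sSel M N j = (1 : Matrix (Fin M × Fin N) (Fin M × Fin N) ℂ).submatrix
      (Prod.map (skipIndex i) id ∘ ι) id := by
    rw [sSel_eq_submatrix]
    simp [ι, Function.comp_def, hp]
  have hW : (1 + K) * W = 1 := by
    rw [← one_kronecker_one, ← add_kronecker, ← mul_kronecker_mul, hV, Matrix.mul_one]
  -- the `∘ id` lets `← submatrix_submatrix` rewrite every product as a submatrix of `B ⊗ₖ 1`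
  have hBar : sBar M N i = (1 : Matrix (Fin M × Fin N) (Fin M × Fin N) ℂ).submatrix
      (Prod.map (skipIndex i) id ∘ id) id := sBar_eq_submatrix M N i
  rw [hSel, hBar]
  simp only [one_submatrix_mul_mul_transpose_one_submatrix, ← submatrix_submatrix, hG]
  rw [inv_eq_right_inv (by simpa using hW)]
  have hmul : K.submatrix ι id * W * K.submatrix id ι = (K * W * K).submatrix ι ι := by
    rw [submatrix_mul _ _ ι id ι Function.bijective_id,
      submatrix_mul _ _ ι id id Function.bijective_id]
    rfl
  calc _ = (K - K * W * K).submatrix ι ι := by rw [hmul]; rfl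
    _ = (1 - V p p) • 1 := by
      rw [sub_mul_mul_eq_one_sub_of_mul_eq_one hW, ← one_kronecker_one, ← Matrix.sub_kronecker,
        kronecker_one_submatrix_prodMk, Matrix.sub_apply, one_apply_eq]

theorem dftColumn_mul_star (M m : ℕ) (j : Fin M) :
    dftColumn M m j * star (dftColumn M m j) = 1 := by
  rw [dftColumn, exp_neg_mul_star_exp_neg_eq_zpow, sub_self, zpow_zero]

theorem exists_one_add_smul_mul_eq_one_and_one_sub_apply {n : Type*} [Fintype n] [DecidableEq n]
    {y : n → ℂ} (hy : ∀ k, y k * star (y k) = 1) {β μ : ℂ} (hμ : (Fintype.card n : ℂ) = μ - 1)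
    (hβ : 1 + β ≠ 0) (hβμ : 1 + β * μ ≠ 0) (p : n) :
    ∃ V, (1 + β • (μ • 1 - vecMulVec y (star y))) * V = 1 ∧
      1 - V p p = (β * μ - β / (1 + β)) / (1 + β * μ) := by
  have hdot : star y ⬝ᵥ y = μ - 1 := by
    simp_rw [dotProduct, Pi.star_apply, mul_comm (star _), hy]
    simp [hμ]
  have hsub : 1 + β * μ - β * (star y ⬝ᵥ y) = 1 + β := by rw [hdot]; ring
  have hV := smul_one_sub_smul_vecMulVec_mul y (star y) hβμ (hsub ▸ hβ)
  rw [hsub] at hV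
  refine ⟨(1 + β * μ)⁻¹ • (1 + (β / (1 + β)) • vecMulVec y (star y)), ?_, ?_⟩
  · rwa [show (1 : Matrix n n ℂ) + β • (μ • 1 - vecMulVec y (star y)) =
      (1 + β * μ) • 1 - β • vecMulVec y (star y) by module]
  · simp only [Matrix.smul_apply, Matrix.add_apply, one_apply_eq, vecMulVec_apply, Pi.star_apply,
      hy, smul_eq_mul, mul_one]
    field_simp
    ring

theorem gamma_pos_and_lt_one {M N : ℕ} (hM : 1 ≤ M) (hN : 1 ≤ N) {α : ℝ} (hα : 0 < α) :
    0 < (α * M * N - N * α / (1 + (N : ℝ) * α)) / (1 + (M : ℝ) * N * α) ∧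
      (α * M * N - N * α / (1 + (N : ℝ) * α)) / (1 + (M : ℝ) * N * α) < 1 := by
  have hM' : (1 : ℝ) ≤ M := by exact_mod_cast hM
  have hN' : (1 : ℝ) ≤ N := by exact_mod_cast hN
  have hNα : 0 < (N : ℝ) * α := by positivity
  have hdiv : N * α / (1 + (N : ℝ) * α) < N * α := div_lt_self (by positivity) (by linarith)
  constructor
  · exact div_pos (by nlinarith) (by positivity)
  · rw [div_lt_one (by positivity)]
    nlinarith [div_pos hNα (by positivity : (0 : ℝ) < 1 + N * α)]

/-- with `F̄ = √α·Q̄_m`, for every `i ≠ j`,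
`(S_j F̄ F̄ᴴ S_jᵀ) ⊗ I_N − [(S_j F̄ F̄ᴴ S̄_(i)ᵀ)(I + S̄_(i) F̄ F̄ᴴ S̄_(i)ᵀ)⁻¹(S̄_(i) F̄ F̄ᴴ S_jᵀ)] ⊗ I_N
 = Γ·I_{N²}`, where `Γ = (αMN − Nα/(1+Nα))/(1+MNα) ∈ (0,1)`. -/
theorem stmt_16 (M N : ℕ) (hM : 2 ≤ M) (hN : 1 ≤ N) (m : ℕ) (hm : m ≤ M - 1)
    (α : ℝ) (hα : 0 < α)
    (Qbar : Matrix (Fin M × Fin N)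
      {k : Fin (N * M) // ∀ n : Fin N, (k : ℕ) ≠ m + (n : ℕ) * M} ℂ)
    (hQbar : ∀ (j : Fin M) (b : Fin N)
        (k : {k : Fin (N * M) // ∀ n : Fin N, (k : ℕ) ≠ m + (n : ℕ) * M}),
      Qbar (j, b) k =
        Complex.exp (-(2 * (Real.pi : ℂ) * Complex.I *
          ((((j : ℕ) * N + (b : ℕ)) * ((k : Fin (N * M)) : ℕ) : ℕ) : ℂ)) / ((N * M : ℕ) : ℂ)))
    (F : Matrix (Fin M × Fin N)
      {k : Fin (N * M) // ∀ n : Fin N, (k : ℕ) ≠ m + (n : ℕ) * M} ℂ)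
    (hF : F = ((Real.sqrt α : ℝ) : ℂ) • Qbar)
    (Γ : ℝ)
    (hΓ : Γ = (α * M * N - N * α / (1 + (N : ℝ) * α)) / (1 + (M : ℝ) * N * α)) :
    0 < Γ ∧ Γ < 1 ∧
      ∀ i j : Fin M, i ≠ j →
        (sSel M N j * F * Fᴴ * (sSel M N j)ᵀ) ⊗ₖ (1 : Matrix (Fin N) (Fin N) ℂ) -
            ((sSel M N j * F * Fᴴ * (sBar M N i)ᵀ) *
                ((1 : Matrix (Fin (M - 1) × Fin N) (Fin (M - 1) × Fin N) ℂ) +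
                  sBar M N i * F * Fᴴ * (sBar M N i)ᵀ)⁻¹ *
                (sBar M N i * F * Fᴴ * (sSel M N j)ᵀ)) ⊗ₖ
              (1 : Matrix (Fin N) (Fin N) ℂ) =
          ((Γ : ℂ)) • (1 : Matrix ((Fin N × Fin N)) ((Fin N × Fin N)) ℂ) := by
  have hM1 : 1 ≤ M := by omega
  obtain ⟨hΓpos, hΓlt⟩ := gamma_pos_and_lt_one hM1 hN hα
  refine ⟨hΓ ▸ hΓpos, hΓ ▸ hΓlt, fun i j hij => ?_⟩
  obtain ⟨p, hp⟩ := exists_skipIndex_eq hij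
  set y := dftColumn M m ∘ skipIndex i
  have hK : (F * Fᴴ).submatrix (Prod.map (skipIndex i) id) (Prod.map (skipIndex i) id) =
      (((α * N : ℝ) : ℂ) • ((M : ℂ) • 1 - vecMulVec y (star y))) ⊗ₖ 1 := by
    rw [hF, conjTranspose_smul, Matrix.smul_mul, Matrix.mul_smul, smul_smul, RCLike.star_def,
      Complex.conj_ofReal, ← Complex.ofReal_mul, Real.mul_self_sqrt hα.le,
      mul_conjTranspose_eq_of_dft_columns_removed (by omega) (by omega) Qbar hQbar]
    ext ⟨k, b⟩ ⟨k', b'⟩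
    simp [y, one_apply, (skipIndex_injective i).eq_iff, vecMulVec_apply, mul_assoc]
  obtain ⟨V, hV, hVpp⟩ := exists_one_add_smul_mul_eq_one_and_one_sub_apply
    (fun k => dftColumn_mul_star M m (skipIndex i k)) (β := ((α * N : ℝ) : ℂ)) (μ := M)
    (by simp [Nat.cast_sub hM1])
    (by exact_mod_cast (by positivity : (0 : ℝ) < 1 + α * N).ne')
    (by exact_mod_cast (by positivity : (0 : ℝ) < 1 + α * N * M).ne') p
  simp only [Matrix.mul_assoc (sSel M N j) F, Matrix.mul_assoc (sBar M N i) F]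
  rw [← Matrix.sub_kronecker, sSel_sub_sBar_inv_eq_smul_one hp _ hK hV, hVpp, smul_kronecker,
    one_kronecker_one, hΓ]
  congr 1
  push_cast
  ring
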